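/- arXiv:2012.08682 — 2 statements merged into one kernel-verified Lean document; each statement's English description precedes it below -/
import Mathlib

section
/- If period p is an optimal period (i.e., n̄(p) = n*), then for every slot t within period p (s_p ≤ t ≤ f_p) and every source m, the AoI under the auxiliary algorithm equals the AoI under the optimal algorithm: h^η̂_m(t) = h^{π*}_m(t). -/
open MeasureTheory ProbabilityTheory

namespace AgingBandits

/-! ### System model

A single-hop wireless network with `M` sources, `N` unreliable ON/OFF channels and one
destination, evolving in discrete slots `t = 1, 2, …`.  At the beginning of each slot each
source independently generates a packet with probability `lam`; each source keeps only its
freshest undelivered packet.  In each slot the learning algorithm selects one source and one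
channel; the selected source's packet (or a dummy packet if its queue is empty) is delivered
iff the selected channel is ON.  Channel states are coupled through a single i.i.d. uniform
sequence `U`: channel `n` is ON in slot `t` iff `U t ≤ mu n`. -/

/-- The observation available to the source policy in a slot: the packet generations of the
slot, the current AoI of every source, and the generation times of the packets currently
waiting in the sources' queues (after the generations of the slot). -/
structure SrcObs (M : ℕ) where
  arr : Fin M → Bool
  age : Fin M → ℕ
  queue : Fin M → Option ℕ

/-- A source policy: maps the source history `H_A(t) = {a(1), h(1), …, a(t), h(t)}`
(together with the generation times of the queued packets) to the source selected in slot
`t`. -/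
def SourcePolicy (M : ℕ) : Type := List (SrcObs M) → Fin M

/-- A queue-independent channel policy: maps the channel history
`H_B(t) = {n(1), b(1), …, n(t-1), b(t-1)}` of previously selected channels and observed
channel states, together with a fresh uniform random seed (allowing randomized policies),
to the channel selected in slot `t`. -/
def ChannelPolicy (N : ℕ) : Type := List (Fin N × Bool) → ℝ → Fin N

/-- A queue-dependent channel policy: additionally observes, for each past slot and for the
current slot, whether the system was empty (no undelivered data packet in any queue). -/
def QChannelPolicy (N : ℕ) : Type := List (Fin N × Bool × Bool) → Bool → ℝ → Fin N

/-- A queue-independent channel policy regarded as a (degenerate) queue-dependent one. -/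
def liftQI {N : ℕ} (pb : ChannelPolicy N) : QChannelPolicy N :=
  fun hist _ v => pb (hist.map fun x => (x.1, x.2.1)) v

/-- A source policy is work-conserving if it never selects a source with an empty queue
(i.e. never transmits a dummy packet) while some source has an undelivered data packet. -/
def WorkConserving {M : ℕ} (pa : SourcePolicy M) : Prop :=
  ∀ (L : List (SrcObs M)) (o : SrcObs M),
    (∃ m, (o.queue m).isSome) → (o.queue (pa (L ++ [o]))).isSome

/-- The state of the network at the end of a slot:  `tau m` is the generation time of the
latest packet of source `m` delivered to the destination, `queue m` is the generation time
of the freshest undelivered packet of source `m` (if any), `chHist` records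
(selected channel, observed state, system-empty flag) for every elapsed slot, `srcHist`
records the source observations of every elapsed slot, and `selCh`, `selSrc`, `emp` are the
channel and source selected in, and the empty-system indicator `E(t)` of, the last slot. -/
structure State (M N : ℕ) where
  tau : Fin M → ℕ
  queue : Fin M → Option ℕ
  chHist : List (Fin N × Bool × Bool)
  srcHist : List (SrcObs M)
  selCh : Fin N
  selSrc : Fin M
  emp : Bool

variable {M N : ℕ} [NeZero M] [NeZero N]

/-- Initial state (before slot `1`): `τ_m = 0`, all queues empty. -/
def initState (M N : ℕ) [NeZero M] [NeZero N] : State M N :=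
  ⟨fun _ => 0, fun _ => none, [], [], 0, 0, true⟩

open scoped Classical in
/-- One slot of the dynamics.  At the beginning of slot `t`, packet generations `a` refresh
the queues; the source selector and the channel policy make their selections; the selected
channel is ON iff `u ≤ mu nsel` (coupled channel states); on a successful transmission of a
data packet, `τ` is updated to the generation time of the delivered packet and the packet
leaves its queue. -/
noncomputable def step (mu : Fin N → ℝ) (sel : List (SrcObs M) → Fin M)
    (pb : QChannelPolicy N) (t : ℕ) (a : Fin M → Bool) (u v : ℝ) (s : State M N) :
    State M N :=
  let q1 : Fin M → Option ℕ := fun m => if a m then some t else s.queue m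
  let obs : SrcObs M := ⟨a, fun m => t - s.tau m, q1⟩
  let srcHist := s.srcHist ++ [obs]
  let empty : Bool := decide (∀ m, q1 m = none)
  let msel := sel srcHist
  let nsel := pb s.chHist empty v
  let isOn : Bool := decide (u ≤ mu nsel)
  let chHist := s.chHist ++ [(nsel, isOn, empty)]
  match isOn, q1 msel with
  | true, some g =>
      ⟨Function.update s.tau msel g, Function.update q1 msel none,
        chHist, srcHist, nsel, msel, empty⟩
  | _, _ => ⟨s.tau, q1, chHist, srcHist, nsel, msel, empty⟩

/-- The state at the end of slot `t`, starting from the empty initial state, given the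
per-slot source selector `sel`, the queue-dependent channel policy `pb`, the packet
generation stream `a`, the channel-coupling stream `u` and the policy-randomization
stream `v`. -/
noncomputable def run (mu : Fin N → ℝ) (sel : ℕ → List (SrcObs M) → Fin M)
    (pb : QChannelPolicy N) (a : ℕ → Fin M → Bool) (u v : ℕ → ℝ) : ℕ → State M N
  | 0 => initState M N
  | t + 1 => step mu (sel (t + 1)) pb (t + 1) (a (t + 1)) (u (t + 1)) (v (t + 1))
      (run mu sel pb a u v t)

/-! ### Probabilistic model -/

/-- Index of the independent sources of randomness: the channel-coupling uniforms `U t`,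
the policy-randomization uniforms `V t`, and the packet generations `A t m`. -/
inductive Idx (M : ℕ) where
  | u : ℕ → Idx M
  | v : ℕ → Idx M
  | a : ℕ → Fin M → Idx M

/-- Value type of each randomness source. -/
def IdxType {M : ℕ} : Idx M → Type
  | .u _ => ℝ
  | .v _ => ℝ
  | .a _ _ => Bool

instance {M : ℕ} : ∀ i : Idx M, MeasurableSpace (IdxType i)
  | .u _ => (inferInstance : MeasurableSpace ℝ)
  | .v _ => (inferInstance : MeasurableSpace ℝ)
  | .a _ _ => (inferInstance : MeasurableSpace Bool)

/-- The family of all randomness sources, as a dependent family of random variables. -/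
def family {Ω : Type*} {M : ℕ} (U V : ℕ → Ω → ℝ) (A : ℕ → Fin M → Ω → Bool) :
    ∀ i : Idx M, Ω → IdxType i
  | .u t => U t
  | .v t => V t
  | .a t m => A t m

/-- A network configuration `(λ, μ⃗)` together with its underlying probability space and
primitive random processes: `U t` (channel coupling) and `V t` (policy randomization) are
i.i.d. uniform on `[0,1]`, `A t m` are i.i.d. Bernoulli(`λ`) packet generations, and all of
them are mutually independent.  Channel `n` is ON in slot `t` iff `U t ≤ mu n`, so that
`P(channel n ON) = mu n`, i.i.d. over time, and the channel states are coupled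
monotonically across channels. -/
structure Config (M N : ℕ) : Type 1 where
  (lam : ℝ)
  (mu : Fin N → ℝ)
  (Ω : Type)
  [mΩ : MeasurableSpace Ω]
  (P : Measure Ω)
  (probP : IsProbabilityMeasure P)
  (U : ℕ → Ω → ℝ)
  (V : ℕ → Ω → ℝ)
  (A : ℕ → Fin M → Ω → Bool)
  (lam_mem : lam ∈ Set.Ioo (0 : ℝ) 1)
  (mu_mem : ∀ n, mu n ∈ Set.Ioc (0 : ℝ) 1)
  (U_meas : ∀ t, Measurable (U t))
  (V_meas : ∀ t, Measurable (V t))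
  (A_meas : ∀ t m, Measurable (A t m))
  (U_unif : ∀ t, P.map (U t) = volume.restrict (Set.Icc (0 : ℝ) 1))
  (V_unif : ∀ t, P.map (V t) = volume.restrict (Set.Icc (0 : ℝ) 1))
  (A_bern : ∀ t m, P {ω | A t m ω = true} = ENNReal.ofReal lam)
  (indep : iIndepFun (family U V A) P)

attribute [instance] Config.mΩ Config.probP

/-- The trajectory of the network under configuration `cfg`, per-slot source selector `sel`
and channel policy `pb`, on the sample path `ω`. -/
noncomputable def Config.run (cfg : Config M N) (sel : ℕ → List (SrcObs M) → Fin M)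
    (pb : QChannelPolicy N) (ω : cfg.Ω) : ℕ → State M N :=
  AgingBandits.run cfg.mu sel pb (fun t m => cfg.A t m ω) (fun t => cfg.U t ω)
    (fun t => cfg.V t ω)

/-- The AoI `h_m(t) = t - τ_m(t)` of source `m` at (the beginning of) slot `t` under the
learning algorithm `(pa, pb)`. -/
noncomputable def Config.age (cfg : Config M N) (pa : SourcePolicy M)
    (pb : QChannelPolicy N) (ω : cfg.Ω) (t : ℕ) (m : Fin M) : ℕ :=
  t - (cfg.run (fun _ L => pa L) pb ω (t - 1)).tau m

/-- The channel `n(t)` selected in slot `t` by the learning algorithm `(pa, pb)`. -/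
noncomputable def Config.chan (cfg : Config M N) (pa : SourcePolicy M)
    (pb : QChannelPolicy N) (ω : cfg.Ω) (t : ℕ) : Fin N :=
  (cfg.run (fun _ L => pa L) pb ω t).selCh

/-- The expected total AoI `E[Σ_{m=1}^M Σ_{t=1}^T h_m(t)]` of the learning algorithm
`(pa, pb)`. -/
noncomputable def Config.expTotalAge (cfg : Config M N) (pa : SourcePolicy M)
    (pb : QChannelPolicy N) (T : ℕ) : ℝ :=
  ∑ m : Fin M, ∑ t ∈ Finset.Icc 1 T, ∫ ω, (cfg.age pa pb ω t m : ℝ) ∂cfg.P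

/-- The channel policy of the optimal (genie) algorithm `π*`: select the channel `n*` of
highest reliability in every slot. -/
def optChannel (N : ℕ) (nstar : Fin N) : QChannelPolicy N := fun _ _ _ => nstar

/-- The AoI regret `R^π(T)` of the algorithm `π = (pa, pb)` relative to the optimal
algorithm `π* = (paStar, n*)`. -/
noncomputable def Config.regret (cfg : Config M N) (nstar : Fin N)
    (paStar pa : SourcePolicy M) (pb : QChannelPolicy N) (T : ℕ) : ℝ :=
  cfg.expTotalAge pa pb T - cfg.expTotalAge paStar (optChannel N nstar) T

/-- The expected number of suboptimal channel choices
`E[K^π(T)] = Σ_{t=1}^T P(n(t) ≠ n*)` of the algorithm `(pa, pb)`. -/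
noncomputable def Config.expSubopt (cfg : Config M N) (nstar : Fin N)
    (pa : SourcePolicy M) (pb : QChannelPolicy N) (T : ℕ) : ℝ :=
  ∑ t ∈ Finset.Icc 1 T, (cfg.P {ω | cfg.chan pa pb ω t ≠ nstar}).toReal

end AgingBandits

namespace AgingBandits

/-- Empirical reliability estimate `μ̂_n` of channel `n` computed from the observation
history: the average of the observed states of channel `n` over the exploration slots
(slots in which the system was empty and a dummy packet was transmitted); `0` if channel
`n` has not been explored yet. -/
noncomputable def estimate {N : ℕ} (hist : List (Fin N × Bool × Bool)) (n : Fin N) : ℝ :=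
  let obs := hist.filterMap fun x => if x.1 = n ∧ x.2.2 = true then some x.2.1 else none
  if obs.length = 0 then 0 else (obs.count true : ℝ) / obs.length

/-- The queue-dependent channel policy `η̄_b` of the order-optimal learning algorithm
(Algorithm 2): when the system is empty, select a channel uniformly at random (using the
fresh uniform seed `v`) and use the transmitted dummy packet to update the empirical
estimates; when the system is nonempty, select the channel with the highest current
empirical estimate. -/
noncomputable def etabarB (N : ℕ) [NeZero N] : QChannelPolicy N :=
  fun hist empty v =>
    if empty then ⟨⌊v * N⌋₊ % N, Nat.mod_lt _ (Nat.pos_of_ne_zero (NeZero.ne N))⟩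
    else ((List.finRange N).argmax (estimate hist)).getD
      ⟨0, Nat.pos_of_ne_zero (NeZero.ne N)⟩

variable {M N : ℕ} [NeZero M] [NeZero N]

/-- The trajectory of the optimal algorithm `π* = (paStar, n*)`. -/
noncomputable def Config.optRun (cfg : Config M N) (paStar : SourcePolicy M)
    (nstar : Fin N) (ω : cfg.Ω) : ℕ → State M N :=
  cfg.run (fun _ L => paStar L) (optChannel N nstar) ω

/-- The trajectory of the auxiliary algorithm `η̂`: in every slot `t` it selects the same
source `m*(t)` as the optimal algorithm `π*` (transmitting a dummy packet if that source's
queue is empty) and the channel chosen by the policy `η̄_b`. -/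
noncomputable def Config.auxRun (cfg : Config M N) (paStar : SourcePolicy M)
    (nstar : Fin N) (ω : cfg.Ω) : ℕ → State M N :=
  cfg.run (fun t _ => (cfg.optRun paStar nstar ω t).selSrc) (etabarB N) ω

/-- The AoI `h^η̂_m(t)` of source `m` at slot `t` under the auxiliary algorithm `η̂`. -/
noncomputable def Config.auxAge (cfg : Config M N) (paStar : SourcePolicy M)
    (nstar : Fin N) (ω : cfg.Ω) (t : ℕ) (m : Fin M) : ℕ :=
  t - (cfg.auxRun paStar nstar ω (t - 1)).tau m

/-- The AoI `h^{π*}_m(t)` of source `m` at slot `t` under the optimal algorithm `π*`. -/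
noncomputable def Config.optAge (cfg : Config M N) (paStar : SourcePolicy M)
    (nstar : Fin N) (ω : cfg.Ω) (t : ℕ) (m : Fin M) : ℕ :=
  t - (cfg.optRun paStar nstar ω (t - 1)).tau m

/-- The first slot `s_p` of the `p`-th period (`p ≥ 1`) of the trajectory of the auxiliary
algorithm `η̂`: `s_1 = 1`, and `s_{p+1}` is the next slot `t` at which the system becomes
empty, i.e. `E(t-1) = 0` and `E(t) = 1`. -/
noncomputable def Config.periodStart (cfg : Config M N) (paStar : SourcePolicy M)
    (nstar : Fin N) (ω : cfg.Ω) : ℕ → ℕ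
  | 0 => 0
  | 1 => 1
  | p + 2 =>
      sInf {t | cfg.periodStart paStar nstar ω (p + 1) < t ∧
        (cfg.auxRun paStar nstar ω (t - 1)).emp = false ∧
        (cfg.auxRun paStar nstar ω t).emp = true}

/-- The last slot `f_p = s_{p+1} - 1` of the `p`-th period. -/
noncomputable def Config.periodEnd (cfg : Config M N) (paStar : SourcePolicy M)
    (nstar : Fin N) (ω : cfg.Ω) (p : ℕ) : ℕ :=
  cfg.periodStart paStar nstar ω (p + 1) - 1

/-- The channel `n̄(p)` used by the policy `η̄_b` throughout the nonempty phase of period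
`p`: the channel selected at the first nonempty slot of period `p` (the estimates, and
hence the selected channel, do not change during a nonempty phase). -/
noncomputable def Config.nbar (cfg : Config M N) (paStar : SourcePolicy M)
    (nstar : Fin N) (ω : cfg.Ω) (p : ℕ) : Fin N :=
  (cfg.auxRun paStar nstar ω
    (sInf {t | cfg.periodStart paStar nstar ω p ≤ t ∧
      (cfg.auxRun paStar nstar ω t).emp = false})).selCh

/-- The cumulative AoI `y^η̂_m(p) = Σ_{t=s_p}^{f_p} h^η̂_m(t)` of source `m` during period
`p` under the auxiliary algorithm `η̂`. -/
noncomputable def Config.periodAge (cfg : Config M N) (paStar : SourcePolicy M)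
    (nstar : Fin N) (ω : cfg.Ω) (p : ℕ) (m : Fin M) : ℕ :=
  ∑ t ∈ Finset.Icc (cfg.periodStart paStar nstar ω p) (cfg.periodEnd paStar nstar ω p),
    cfg.auxAge paStar nstar ω t m

end AgingBandits

/-!
The auxiliary algorithm `η̂` and the optimal algorithm `π*` select the same source in every
slot, and under the coupling `U(t)` a delivery by `η̂` (on any channel) is also a delivery by
`π*` (on `n*`).  Hence, source by source, `η̂` trails `π*`: either both hold no packet and
agree on `τ`, or `η̂` still holds a packet that `π*` also holds or has delivered as its latest.
At the start of a period the system of `η̂` is empty, so the two algorithms agree on all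
`τ_m` and all queues.  During an optimal period `η̂` transmits on `n*` whenever some packet is
waiting (its estimates only change in empty slots), so from then on both algorithms make the
same deliveries and the AoI processes coincide.
-/

namespace AgingBandits

variable {M N : ℕ}

def State.refresh (s : State M N) (t : ℕ) (a : Fin M → Bool) : Fin M → Option ℕ :=
  fun m => if a m then some t else s.queue m

def State.Synced (sa so : State M N) : Prop :=
  sa.tau = so.tau ∧ sa.queue = so.queue

lemma State.queue_eq_none_of_refresh_eq_none {s : State M N} {t : ℕ} {a : Fin M → Bool}
    {m : Fin M} (h : s.refresh t a m = none) : s.queue m = none := by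
  unfold State.refresh at h
  split_ifs at h
  exact h

section Step

variable (mu : Fin N → ℝ) (sel : List (SrcObs M) → Fin M) (pb : QChannelPolicy N)
  (t : ℕ) (a : Fin M → Bool) (u v : ℝ) (s : State M N)

lemma step_selSrc : (step mu sel pb t a u v s).selSrc =
    sel (s.srcHist ++ [⟨a, fun m => t - s.tau m, s.refresh t a⟩]) := by
  dsimp only [step]; split <;> rfl

lemma step_emp : (step mu sel pb t a u v s).emp = decide (∀ m, s.refresh t a m = none) := by
  dsimp only [step]; split <;> rfl

lemma step_selCh : (step mu sel pb t a u v s).selCh =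
    pb s.chHist (decide (∀ m, s.refresh t a m = none)) v := by
  dsimp only [step]; split <;> rfl

lemma step_chHist : (step mu sel pb t a u v s).chHist = s.chHist ++
    [((step mu sel pb t a u v s).selCh, decide (u ≤ mu (step mu sel pb t a u v s).selCh),
      (step mu sel pb t a u v s).emp)] := by
  rw [step_selCh, step_emp]; dsimp only [step]; split <;> rfl

lemma step_tau_apply (m : Fin M) : (step mu sel pb t a u v s).tau m =
    if m = (step mu sel pb t a u v s).selSrc ∧ u ≤ mu (step mu sel pb t a u v s).selCh
    then (s.refresh t a m).getD (s.tau m) else s.tau m := by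
  rw [step_selSrc, step_selCh]
  unfold State.refresh
  dsimp only [step]
  split
  · next g hon hg =>
    rw [decide_eq_true_iff] at hon
    dsimp only
    rw [Function.update_apply]
    split_ifs <;> simp_all
  · split_ifs <;> simp_all [← Option.eq_none_iff_forall_ne_some]

lemma step_queue_apply (m : Fin M) : (step mu sel pb t a u v s).queue m =
    if m = (step mu sel pb t a u v s).selSrc ∧ u ≤ mu (step mu sel pb t a u v s).selCh
    then none else s.refresh t a m := by
  rw [step_selSrc, step_selCh]
  unfold State.refresh
  dsimp only [step]
  split
  · next g hon hg =>
    rw [decide_eq_true_iff] at hon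
    dsimp only
    rw [Function.update_apply]
    split_ifs <;> simp_all
  · split_ifs <;> simp_all [← Option.eq_none_iff_forall_ne_some]

end Step

/-- `τa, qa` (resp. `τo, qo`) are the latest delivered generation time and the queue of one
source under the trailing (resp. leading) algorithm. -/
def Trails (τa : ℕ) (qa : Option ℕ) (τo : ℕ) (qo : Option ℕ) : Prop :=
  (qa = none ∧ τa = τo ∧ qo = none) ∨ ∃ g, qa = some g ∧ (qo = some g ∨ (qo = none ∧ τo = g))

section Trails

variable {τa τo : ℕ} {qa qo : Option ℕ}

lemma Trails.refresh (h : Trails τa qa τo qo) (b : Bool) (t : ℕ) :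
    Trails τa (if b then some t else qa) τo (if b then some t else qo) := by
  cases b
  · exact h
  · exact Or.inr ⟨t, rfl, Or.inl rfl⟩

lemma Trails.deliver (h : Trails τa qa τo qo) {dA dO : Prop} [Decidable dA] [Decidable dO]
    (hd : dA → dO) :
    Trails (if dA then qa.getD τa else τa) (if dA then none else qa)
      (if dO then qo.getD τo else τo) (if dO then none else qo) := by
  rcases h with ⟨rfl, rfl, rfl⟩ | ⟨g, rfl, rfl | ⟨rfl, rfl⟩⟩ <;>
    by_cases hA : dA <;> by_cases hO : dO <;> simp_all [Trails]

lemma Trails.eq_of_none (h : Trails τa none τo qo) : τa = τo ∧ qo = none := by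
  rcases h with ⟨-, h⟩ | ⟨g, hg, -⟩
  · exact h
  · cases hg

end Trails

section Coupling

variable {mu : Fin N → ℝ} {selA selO : List (SrcObs M) → Fin M} {pbA pbO : QChannelPolicy N}
  {t : ℕ} {a : Fin M → Bool} {u v : ℝ} {sa so : State M N}

lemma trails_step (h : ∀ m, Trails (sa.tau m) (sa.queue m) (so.tau m) (so.queue m))
    (hsel : (step mu selA pbA t a u v sa).selSrc = (step mu selO pbO t a u v so).selSrc)
    (hch : u ≤ mu (step mu selA pbA t a u v sa).selCh →
      u ≤ mu (step mu selO pbO t a u v so).selCh) (m : Fin M) :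
    Trails ((step mu selA pbA t a u v sa).tau m) ((step mu selA pbA t a u v sa).queue m)
      ((step mu selO pbO t a u v so).tau m) ((step mu selO pbO t a u v so).queue m) := by
  rw [step_tau_apply, step_queue_apply, step_tau_apply, step_queue_apply, hsel]
  exact ((h m).refresh (a m) t).deliver fun hA => ⟨hA.1, hch hA.2⟩

lemma synced_step (h : sa.Synced so)
    (hsel : (step mu selA pbA t a u v sa).selSrc = (step mu selO pbO t a u v so).selSrc)
    (hch : (step mu selA pbA t a u v sa).emp = false →
      mu (step mu selA pbA t a u v sa).selCh = mu (step mu selO pbO t a u v so).selCh) :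
    (step mu selA pbA t a u v sa).Synced (step mu selO pbO t a u v so) := by
  obtain ⟨htau, hq⟩ := h
  have hrefresh : sa.refresh t a = so.refresh t a := by
    unfold State.refresh; rw [hq]
  have hmu : ∀ m, so.refresh t a m ≠ none →
      mu (step mu selA pbA t a u v sa).selCh = mu (step mu selO pbO t a u v so).selCh :=
    fun m hm => hch (by rw [step_emp, hrefresh]; exact decide_eq_false fun h => hm (h m))
  constructor <;> funext m
  · rw [step_tau_apply, step_tau_apply, hsel, htau, hrefresh]
    by_cases hm : so.refresh t a m = none
    · simp [hm]
    · rw [hmu m hm]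
  · rw [step_queue_apply, step_queue_apply, hsel, hrefresh]
    by_cases hm : so.refresh t a m = none
    · simp [hm]
    · rw [hmu m hm]

end Coupling

lemma estimate_append_false (hist : List (Fin N × Bool × Bool)) (c : Fin N) (b : Bool) :
    estimate (hist ++ [(c, b, false)]) = estimate hist := by
  funext n
  simp [estimate, List.filterMap_append]

lemma etabarB_false_congr [NeZero N] {hist₁ hist₂ : List (Fin N × Bool × Bool)}
    (h : estimate hist₁ = estimate hist₂) (v₁ v₂ : ℝ) :
    etabarB N hist₁ false v₁ = etabarB N hist₂ false v₂ := by
  simp only [etabarB, h, Bool.false_eq_true, if_false]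

lemma eq_false_of_lt_sInf (e : ℕ → Bool) {s k t : ℕ} (hsk : s ≤ k) (hk : e k = false)
    (hkt : k ≤ t) (ht : t < sInf {t | s < t ∧ e (t - 1) = false ∧ e t = true}) :
    e t = false := by
  induction t, hkt using Nat.le_induction with
  | base => exact hk
  | succ t hkt ih =>
    by_contra hne
    have hmem : t + 1 ∈ {t | s < t ∧ e (t - 1) = false ∧ e t = true} :=
      ⟨by omega, ih (by omega), by simpa using hne⟩
    exact absurd (Nat.sInf_le hmem) (by omega)

namespace Config

variable [NeZero M] [NeZero N] (cfg : Config M N) (paStar : SourcePolicy M) (nstar : Fin N)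
  (ω : cfg.Ω)

lemma optRun_succ (t : ℕ) :
    cfg.optRun paStar nstar ω (t + 1) =
      step cfg.mu (fun L => paStar L) (optChannel N nstar) (t + 1)
        (fun m => cfg.A (t + 1) m ω) (cfg.U (t + 1) ω) (cfg.V (t + 1) ω)
        (cfg.optRun paStar nstar ω t) := rfl

lemma auxRun_succ (t : ℕ) :
    cfg.auxRun paStar nstar ω (t + 1) =
      step cfg.mu (fun _ => (cfg.optRun paStar nstar ω (t + 1)).selSrc) (etabarB N) (t + 1)
        (fun m => cfg.A (t + 1) m ω) (cfg.U (t + 1) ω) (cfg.V (t + 1) ω)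
        (cfg.auxRun paStar nstar ω t) := rfl

lemma ne_zero_of_auxRun_emp_eq_false {t : ℕ} (h : (cfg.auxRun paStar nstar ω t).emp = false) :
    t ≠ 0 := by
  rintro rfl
  cases h

lemma optRun_succ_selCh (t : ℕ) : (cfg.optRun paStar nstar ω (t + 1)).selCh = nstar := by
  rw [optRun_succ, step_selCh]; rfl

lemma auxRun_succ_selSrc (t : ℕ) :
    (cfg.auxRun paStar nstar ω (t + 1)).selSrc = (cfg.optRun paStar nstar ω (t + 1)).selSrc := by
  rw [auxRun_succ, step_selSrc]

lemma auxRun_succ_selCh (t : ℕ) :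
    (cfg.auxRun paStar nstar ω (t + 1)).selCh = etabarB N (cfg.auxRun paStar nstar ω t).chHist
      (cfg.auxRun paStar nstar ω (t + 1)).emp (cfg.V (t + 1) ω) := by
  rw [auxRun_succ, step_selCh, step_emp]

lemma trails_auxRun_optRun (hle : ∀ n, cfg.mu n ≤ cfg.mu nstar) (t : ℕ) (m : Fin M) :
    Trails ((cfg.auxRun paStar nstar ω t).tau m) ((cfg.auxRun paStar nstar ω t).queue m)
      ((cfg.optRun paStar nstar ω t).tau m) ((cfg.optRun paStar nstar ω t).queue m) := by
  induction t generalizing m with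
  | zero => exact Or.inl ⟨rfl, rfl, rfl⟩
  | succ t ih =>
    exact trails_step ih (auxRun_succ_selSrc cfg paStar nstar ω t) (fun hu => hu.trans <|
      (hle _).trans_eq (congrArg cfg.mu (optRun_succ_selCh cfg paStar nstar ω t).symm)) m

lemma synced_of_succ_emp (hle : ∀ n, cfg.mu n ≤ cfg.mu nstar) {t : ℕ}
    (h : (cfg.auxRun paStar nstar ω (t + 1)).emp = true) :
    (cfg.auxRun paStar nstar ω t).Synced (cfg.optRun paStar nstar ω t) := by
  rw [auxRun_succ, step_emp, decide_eq_true_iff] at h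
  have key : ∀ m, (cfg.auxRun paStar nstar ω t).tau m = (cfg.optRun paStar nstar ω t).tau m ∧
      (cfg.auxRun paStar nstar ω t).queue m = (cfg.optRun paStar nstar ω t).queue m := by
    intro m
    have hq := State.queue_eq_none_of_refresh_eq_none (h m)
    have htr := trails_auxRun_optRun cfg paStar nstar ω hle t m
    rw [hq] at htr
    exact ⟨htr.eq_of_none.1, hq.trans htr.eq_of_none.2.symm⟩
  exact ⟨funext fun m => (key m).1, funext fun m => (key m).2⟩

lemma synced_succ {t : ℕ}
    (h : (cfg.auxRun paStar nstar ω t).Synced (cfg.optRun paStar nstar ω t))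
    (hch : (cfg.auxRun paStar nstar ω (t + 1)).emp = false →
      (cfg.auxRun paStar nstar ω (t + 1)).selCh = nstar) :
    (cfg.auxRun paStar nstar ω (t + 1)).Synced (cfg.optRun paStar nstar ω (t + 1)) :=
  synced_step h (auxRun_succ_selSrc cfg paStar nstar ω t)
    fun he => congrArg cfg.mu ((hch he).trans (optRun_succ_selCh cfg paStar nstar ω t).symm)

lemma estimate_auxRun_succ {t : ℕ} (h : (cfg.auxRun paStar nstar ω (t + 1)).emp = false) :
    estimate (cfg.auxRun paStar nstar ω (t + 1)).chHist =
      estimate (cfg.auxRun paStar nstar ω t).chHist := by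
  rw [auxRun_succ, step_chHist]
  rw [auxRun_succ] at h
  rw [h]
  exact estimate_append_false _ _ _

lemma auxRun_selCh_eq_of_emp_eq_false {k j : ℕ} (hkj : k ≤ j)
    (h : ∀ i, k ≤ i → i ≤ j → (cfg.auxRun paStar nstar ω (i + 1)).emp = false) :
    (cfg.auxRun paStar nstar ω (j + 1)).selCh = (cfg.auxRun paStar nstar ω (k + 1)).selCh := by
  have hest : estimate (cfg.auxRun paStar nstar ω j).chHist =
      estimate (cfg.auxRun paStar nstar ω k).chHist := by
    induction j, hkj using Nat.le_induction with
    | base => rfl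
    | succ j hkj ih =>
      rw [estimate_auxRun_succ cfg paStar nstar ω (h j hkj (by omega))]
      exact ih fun i h1 h2 => h i h1 (by omega)
  rw [auxRun_succ_selCh, auxRun_succ_selCh, h j hkj le_rfl, h k le_rfl hkj]
  exact etabarB_false_congr hest _ _

lemma periodStart_succ {p : ℕ} (hp : 1 ≤ p) :
    cfg.periodStart paStar nstar ω (p + 1) =
      sInf {t | cfg.periodStart paStar nstar ω p < t ∧
        (cfg.auxRun paStar nstar ω (t - 1)).emp = false ∧
        (cfg.auxRun paStar nstar ω t).emp = true} := by
  obtain ⟨q, rfl⟩ : ∃ q, p = q + 1 := ⟨p - 1, by omega⟩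
  rfl

lemma periodStart_emp_of_one_lt {p : ℕ} (h : 1 < cfg.periodStart paStar nstar ω p) :
    (cfg.auxRun paStar nstar ω (cfg.periodStart paStar nstar ω p)).emp = true := by
  rcases p with _ | _ | q
  · exact absurd h (Nat.not_lt_zero 1)
  · exact absurd h (lt_irrefl 1)
  · change 1 < sInf _ at h
    exact (Nat.sInf_mem (Nat.nonempty_of_pos_sInf (one_pos.trans h))).2.2

lemma emp_eq_false_of_mem_period {p k t : ℕ} (hp : 1 ≤ p)
    (hsk : cfg.periodStart paStar nstar ω p ≤ k) (hk : (cfg.auxRun paStar nstar ω k).emp = false)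
    (hkt : k ≤ t) (htf : t ≤ cfg.periodEnd paStar nstar ω p) :
    (cfg.auxRun paStar nstar ω t).emp = false := by
  have hk0 := ne_zero_of_auxRun_emp_eq_false cfg paStar nstar ω hk
  refine eq_false_of_lt_sInf (fun t => (cfg.auxRun paStar nstar ω t).emp) hsk hk hkt ?_
  rw [← periodStart_succ cfg paStar nstar ω hp]
  unfold periodEnd at htf
  omega

lemma auxRun_selCh_eq_nbar {p t : ℕ} (hp : 1 ≤ p) (hst : cfg.periodStart paStar nstar ω p ≤ t)
    (htf : t ≤ cfg.periodEnd paStar nstar ω p) (ht : (cfg.auxRun paStar nstar ω t).emp = false) :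
    (cfg.auxRun paStar nstar ω t).selCh = cfg.nbar paStar nstar ω p := by
  set S : Set ℕ := {t | cfg.periodStart paStar nstar ω p ≤ t ∧
    (cfg.auxRun paStar nstar ω t).emp = false}
  have hTmem : sInf S ∈ S := Nat.sInf_mem ⟨t, hst, ht⟩
  have hTt : sInf S ≤ t := Nat.sInf_le ⟨hst, ht⟩
  obtain ⟨k, hk⟩ : ∃ k, sInf S = k + 1 :=
    Nat.exists_eq_succ_of_ne_zero (ne_zero_of_auxRun_emp_eq_false cfg paStar nstar ω hTmem.2)
  obtain ⟨j, rfl⟩ : ∃ j, t = j + 1 :=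
    Nat.exists_eq_succ_of_ne_zero (ne_zero_of_auxRun_emp_eq_false cfg paStar nstar ω ht)
  change _ = (cfg.auxRun paStar nstar ω (sInf S)).selCh
  rw [hk]
  exact auxRun_selCh_eq_of_emp_eq_false cfg paStar nstar ω (by omega) fun i h1 h2 =>
    emp_eq_false_of_mem_period cfg paStar nstar ω hp hTmem.1 hTmem.2 (by omega) (by omega)

lemma synced_periodStart_pred (hle : ∀ n, cfg.mu n ≤ cfg.mu nstar) (p : ℕ) :
    (cfg.auxRun paStar nstar ω (cfg.periodStart paStar nstar ω p - 1)).Synced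
      (cfg.optRun paStar nstar ω (cfg.periodStart paStar nstar ω p - 1)) := by
  by_cases h : 1 < cfg.periodStart paStar nstar ω p
  · have hemp := periodStart_emp_of_one_lt cfg paStar nstar ω h
    rw [← Nat.sub_add_cancel h.le] at hemp
    exact synced_of_succ_emp cfg paStar nstar ω hle hemp
  · rw [show cfg.periodStart paStar nstar ω p - 1 = 0 by omega]
    exact ⟨rfl, rfl⟩

lemma synced_of_mem_period (hle : ∀ n, cfg.mu n ≤ cfg.mu nstar) {p t : ℕ} (hp : 1 ≤ p)
    (hopt : cfg.nbar paStar nstar ω p = nstar)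
    (hst : cfg.periodStart paStar nstar ω p - 1 ≤ t) (htf : t ≤ cfg.periodEnd paStar nstar ω p) :
    (cfg.auxRun paStar nstar ω t).Synced (cfg.optRun paStar nstar ω t) := by
  induction t, hst using Nat.le_induction with
  | base => exact synced_periodStart_pred cfg paStar nstar ω hle p
  | succ t ht ih =>
    exact synced_succ cfg paStar nstar ω (ih (by omega)) fun he =>
      (auxRun_selCh_eq_nbar cfg paStar nstar ω hp (by omega) htf he).trans hopt

end Config

theorem optimal_period_age_equal_general
    {M N : ℕ} [NeZero M] [NeZero N]
    (cfg : Config M N) (nstar : Fin N)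
    (hstar : ∀ n, n ≠ nstar → cfg.mu n < cfg.mu nstar)
    (paStar : SourcePolicy M)
    (ω : cfg.Ω) (p : ℕ) (hp : 1 ≤ p)
    (hopt : cfg.nbar paStar nstar ω p = nstar) :
    ∀ t : ℕ, cfg.periodStart paStar nstar ω p ≤ t → t ≤ cfg.periodEnd paStar nstar ω p →
      ∀ m : Fin M, cfg.auxAge paStar nstar ω t m = cfg.optAge paStar nstar ω t m := by
  intro t hst htf m
  have hle : ∀ n, cfg.mu n ≤ cfg.mu nstar := fun n => by
    rcases eq_or_ne n nstar with rfl | hn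
    exacts [le_rfl, (hstar n hn).le]
  have hsync := cfg.synced_of_mem_period paStar nstar ω hle hp hopt
    (t := t - 1) (by omega) (by omega)
  rw [Config.auxAge, Config.optAge, hsync.1]

/-- **Optimal periods contribute nothing (Lemma 4 / Lemma A.1).**
If period `p` is an optimal period, i.e. `n̄(p) = n*`, then at every slot `t` within period
`p` (`s_p ≤ t ≤ f_p`) and for every source `m`, the AoI under the auxiliary algorithm `η̂`
equals the AoI under the optimal algorithm `π*`: `h^η̂_m(t) = h^{π*}_m(t)`. -/
theorem optimal_period_age_equal
    {M N : ℕ} [NeZero M] [NeZero N] (hM : 1 ≤ M) (hN : 2 ≤ N)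
    (cfg : Config M N) (nstar : Fin N)
    (hstar : ∀ n, n ≠ nstar → cfg.mu n < cfg.mu nstar)
    (paStar : SourcePolicy M) (hWCstar : WorkConserving paStar)
    (ω : cfg.Ω) (p : ℕ) (hp : 1 ≤ p)
    (hopt : cfg.nbar paStar nstar ω p = nstar) :
    ∀ t : ℕ, cfg.periodStart paStar nstar ω p ≤ t → t ≤ cfg.periodEnd paStar nstar ω p →
      ∀ m : Fin M, cfg.auxAge paStar nstar ω t m = cfg.optAge paStar nstar ω t m :=
  optimal_period_age_equal_general cfg nstar hstar paStar ω p hp hopt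

end AgingBandits
end

section
/- Consider k exploration slots in which a channel is selected uniformly at random: let X_1,…,X_k be i.i.d. uniform on {1,…,N}, and independently let Y_1,…,Y_k be i.i.d. Bernoulli(μ_n) (the state of channel n in each slot). Let S = #{i : X_i = n} and let μ̂_n = (1/S)·Σ_{i : X_i = n} Y_i (with μ̂_n = 0 if S = 0) be the empirical reliability estimate of channel n. Then for any Δ > 0, P(μ̂_n − μ_n ≥ Δ/2) ≤ exp(−k/(2N²)) + exp(−Δ²·k/(4N)). -/
/-!
Split the event `μ̂ₙ - μₙ ≥ Δ/2` according to whether channel `n` was selected in fewer than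
`k/(2N)` slots. The selection count is a sum of `k` independent indicators of mean `1/N`, so by
Hoeffding's inequality it falls below half its mean with probability at most `exp(-k/(2N²))`.
On the complementary event, `μ̂ₙ ≥ μₙ + Δ/2` forces `Σᵢ 1{Xᵢ = n} (2Δ(Yᵢ - μₙ) - Δ²/2)` to be at
least `Δ²k/(4N)`. By Hoeffding's lemma and the independence of `Xᵢ` and `Yᵢ` each summand has
`E[exp] ≤ 1`, so Markov's inequality applied to the exponential of the sum gives
`exp(-Δ²k/(4N))`, with no conditioning on the selection pattern.
-/

open MeasureTheory ProbabilityTheory Real Finset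

section

variable {Ω : Type*} [MeasurableSpace Ω] {P : Measure Ω}

lemma integral_toNat_eq {Y : Ω → Bool} (hY : Measurable Y) {μ : ℝ} (hμ : 0 ≤ μ)
    (hYμ : P {ω | Y ω = true} = ENNReal.ofReal μ) :
    ∫ ω, ((Y ω).toNat : ℝ) ∂P = μ := by
  rw [← ENNReal.toReal_ofReal hμ, ← hYμ, ← measureReal_def,
    ← integral_indicator_one (s := {ω | Y ω = true}) (hY (measurableSet_singleton true))]
  congr 1; ext ω; cases h : Y ω <;> simp [h]

lemma integrable_exp_ite [IsFiniteMeasure P] {α : Type*} [MeasurableSpace α]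
    [MeasurableSingletonClass α] [DecidableEq α] {X : Ω → α} {U : Ω → ℝ} (hX : Measurable X)
    (hU : Measurable U) (a : α) (hint : Integrable (fun ω ↦ exp (U ω)) P) :
    Integrable (fun ω ↦ exp (if X ω = a then U ω else 0)) P := by
  refine (hint.add (integrable_const 1)).mono' ?_ (ae_of_all _ fun ω ↦ ?_)
  · exact (Measurable.ite (hX (measurableSet_singleton a)) hU measurable_const).exp
      |>.aestronglyMeasurable
  · simp only [norm_eq_abs, abs_exp]
    split_ifs <;> simp [(exp_pos _).le]

variable [IsProbabilityMeasure P]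

lemma hasSubgaussianMGF_of_mem_unitInterval {Z : Ω → ℝ} (hZ : Measurable Z)
    (h01 : ∀ ω, Z ω ∈ Set.Icc (0 : ℝ) 1) :
    HasSubgaussianMGF (fun ω ↦ Z ω - P[Z]) (1 / 4) P := by
  convert hasSubgaussianMGF_of_mem_Icc hZ.aemeasurable (ae_of_all P h01) using 1
  ext; norm_num

lemma integral_exp_mul_sub_sub_le_one {Z : Ω → ℝ} (hZ : Measurable Z)
    (h01 : ∀ ω, Z ω ∈ Set.Icc (0 : ℝ) 1) (t : ℝ) :
    ∫ ω, exp (t * (Z ω - P[Z]) - t ^ 2 / 8) ∂P ≤ 1 := by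
  have hoeffding := (hasSubgaussianMGF_of_mem_unitInterval (P := P) hZ h01).mgf_le t
  calc ∫ ω, exp (t * (Z ω - P[Z]) - t ^ 2 / 8) ∂P
      = mgf (fun ω ↦ Z ω - P[Z]) P t * exp (-(t ^ 2 / 8)) := by
        simp_rw [sub_eq_add_neg _ (t ^ 2 / 8), exp_add, integral_mul_const]; rfl
    _ ≤ exp (t ^ 2 / 8) * exp (-(t ^ 2 / 8)) := by
        gcongr; refine hoeffding.trans_eq ?_; congr 1; push_cast; ring
    _ = 1 := by rw [← exp_add, add_neg_cancel, exp_zero]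

lemma measureReal_sum_le_sum_integral_sub_le {ι : Type*} [Fintype ι] {Z : ι → Ω → ℝ}
    (hindep : iIndepFun Z P) (hmeas : ∀ i, Measurable (Z i))
    (h01 : ∀ i ω, Z i ω ∈ Set.Icc (0 : ℝ) 1) {ε : ℝ} (hε : 0 ≤ ε) :
    P.real {ω | ∑ i, Z i ω ≤ ∑ i, P[Z i] - ε} ≤ exp (-2 * ε ^ 2 / Fintype.card ι) := by
  have hsub : ∀ i, HasSubgaussianMGF (fun ω ↦ P[Z i] - Z i ω) (1 / 4) P := fun i ↦ by
    convert (hasSubgaussianMGF_of_mem_unitInterval (P := P) (hmeas i) (h01 i)).neg using 1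
    ext ω; simp
  have hindep' := hindep.comp (fun i (y : ℝ) ↦ P[Z i] - y) fun i ↦ by fun_prop
  have hoeffding := HasSubgaussianMGF.measure_sum_ge_le_of_iIndepFun (c := fun _ ↦ 1 / 4)
    hindep' (s := univ) (fun i _ ↦ hsub i) hε
  convert hoeffding using 2
  · ext ω; simp only [Set.mem_ofPred_eq, Function.comp_apply, sum_sub_distrib]
    constructor <;> intro <;> linarith
  · simp only [sum_const, card_univ, nsmul_eq_mul, NNReal.coe_mul, NNReal.coe_natCast, one_div,
      NNReal.coe_inv, NNReal.coe_ofNat]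
    ring

lemma measure_two_mul_card_lt_le {α ι : Type*} [MeasurableSpace α] [MeasurableSingletonClass α]
    [DecidableEq α] [Fintype ι] {X : ι → Ω → α} (hindep : iIndepFun X P)
    (hmeas : ∀ i, Measurable (X i)) {a : α} {p : ℝ}
    (hp : ∀ i, P.real {ω | X i ω = a} = p) :
    P {ω | 2 * (#{i | X i ω = a} : ℝ) < Fintype.card ι * p} ≤
      ENNReal.ofReal (exp (-(Fintype.card ι * p ^ 2 / 2))) := by
  set Z : ι → Ω → ℝ := fun i ω ↦ if X i ω = a then 1 else 0 with hZ
  have hindicator : Measurable fun x : α ↦ if x = a then (1 : ℝ) else 0 :=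
    Measurable.ite (measurableSet_singleton a) measurable_const measurable_const
  have hZ01 : ∀ i ω, Z i ω ∈ Set.Icc (0 : ℝ) 1 := fun i ω ↦ by
    simp only [hZ]; split_ifs <;> simp
  have hmean : ∀ i, P[Z i] = p := fun i ↦ by
    rw [← hp i, ← integral_indicator_one (s := {ω | X i ω = a})
      (hmeas i (measurableSet_singleton a))]
    simp [hZ, Set.indicator_apply]
  have hcount : ∀ ω, (#{i | X i ω = a} : ℝ) = ∑ i, Z i ω := fun ω ↦ by
    simp [hZ, Finset.sum_boole]
  rcases (Fintype.card ι).eq_zero_or_pos with hk | hk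
  · simpa [hk] using prob_le_one
  have hp0 : 0 ≤ p := by
    obtain ⟨i⟩ := Fintype.card_pos_iff.mp hk
    exact hp i ▸ measureReal_nonneg
  have hsub : {ω | 2 * (#{i | X i ω = a} : ℝ) < Fintype.card ι * p} ⊆
      {ω | ∑ i, Z i ω ≤ ∑ i, P[Z i] - Fintype.card ι * p / 2} := fun ω hω ↦ by
    simp only [Set.mem_ofPred_eq, hmean, sum_const, card_univ, nsmul_eq_mul, ← hcount] at hω ⊢
    linarith
  calc P {ω | 2 * (#{i | X i ω = a} : ℝ) < Fintype.card ι * p}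
      ≤ ENNReal.ofReal (P.real {ω | ∑ i, Z i ω ≤ ∑ i, P[Z i] - Fintype.card ι * p / 2}) := by
        rw [ofReal_measureReal]; exact measure_mono hsub
    _ ≤ ENNReal.ofReal (exp (-2 * (Fintype.card ι * p / 2) ^ 2 / Fintype.card ι)) :=
        ENNReal.ofReal_le_ofReal <| measureReal_sum_le_sum_integral_sub_le
          (hindep.comp (fun _ ↦ _) fun _ ↦ hindicator) (fun i ↦ hindicator.comp (hmeas i))
          hZ01 (by positivity)
    _ = ENNReal.ofReal (exp (-(Fintype.card ι * p ^ 2 / 2))) := by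
        congr 2; field_simp

lemma measureReal_le_sum_le_exp_neg {ι : Type*} [Fintype ι] {U : ι → Ω → ℝ}
    (hindep : iIndepFun U P) (hmeas : ∀ i, Measurable (U i))
    (hint : ∀ i, Integrable (fun ω ↦ exp (U i ω)) P) (hU : ∀ i, ∫ ω, exp (U i ω) ∂P ≤ 1)
    (c : ℝ) :
    P.real {ω | c ≤ ∑ i, U i ω} ≤ exp (-c) := by
  have hint' : ∀ i ∈ (univ : Finset ι), Integrable (fun ω ↦ exp (1 * U i ω)) P := by
    simpa using hint
  have chernoff := measure_ge_le_exp_mul_mgf (X := ∑ i, U i) c zero_le_one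
    (hindep.integrable_exp_mul_sum hmeas hint')
  rw [hindep.mgf_sum hmeas] at chernoff
  have hprod : ∏ i, mgf (U i) P 1 ≤ 1 :=
    prod_le_one (fun _ _ ↦ mgf_nonneg) fun i _ ↦ by simpa [mgf] using hU i
  calc P.real {ω | c ≤ ∑ i, U i ω} = P.real {ω | c ≤ (∑ i, U i) ω} := by
        simp [Finset.sum_apply]
    _ ≤ exp (-1 * c) * ∏ i, mgf (U i) P 1 := chernoff
    _ ≤ exp (-c) := by rw [neg_one_mul]; exact mul_le_of_le_one_right (exp_pos _).le hprod

lemma integral_exp_ite_le_one {α : Type*} [MeasurableSpace α] [MeasurableSingletonClass α]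
    [DecidableEq α] {X : Ω → α} {U : Ω → ℝ} (hX : Measurable X) (hU : Measurable U)
    (hXU : IndepFun X U P) (a : α) (hint : Integrable (fun ω ↦ exp (U ω)) P)
    (hU1 : ∫ ω, exp (U ω) ∂P ≤ 1) :
    ∫ ω, exp (if X ω = a then U ω else 0) ∂P ≤ 1 := by
  set I : α → ℝ := fun x ↦ if x = a then 1 else 0 with hI
  have hImeas : Measurable I :=
    Measurable.ite (measurableSet_singleton a) measurable_const measurable_const
  have hI01 : ∀ x, 0 ≤ I x ∧ I x ≤ 1 := fun x ↦ by simp only [hI]; split_ifs <;> simp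
  have hsplit : ∀ ω, exp (if X ω = a then U ω else 0) = 1 + I (X ω) * (exp (U ω) - 1) := by
    intro ω; simp only [hI]; split_ifs <;> simp
  have hprod : ∫ ω, I (X ω) * (exp (U ω) - 1) ∂P =
      (∫ ω, I (X ω) ∂P) * ∫ ω, (exp (U ω) - 1) ∂P :=
    hXU.integral_fun_comp_mul_comp (g := fun u ↦ exp u - 1) hX.aemeasurable hU.aemeasurable
      hImeas.aestronglyMeasurable (by fun_prop)
  have hint_prod : Integrable (fun ω ↦ I (X ω) * (exp (U ω) - 1)) P :=
    (hint.sub (integrable_const 1)).bdd_mul (c := 1) (hImeas.comp hX).aestronglyMeasurable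
      (ae_of_all _ fun ω ↦ by simpa [abs_of_nonneg (hI01 _).1] using (hI01 (X ω)).2)
  have hI0 : 0 ≤ ∫ ω, I (X ω) ∂P := integral_nonneg fun ω ↦ (hI01 (X ω)).1
  have hU0 : ∫ ω, (exp (U ω) - 1) ∂P ≤ 0 := by
    rw [integral_sub hint (integrable_const 1)]; simpa using hU1
  simp_rw [hsplit]
  rw [integral_add (integrable_const 1) hint_prod, hprod]
  simpa using mul_nonpos_of_nonneg_of_nonpos hI0 hU0

/-- The `t ^ 2 / 8` is Hoeffding's bound on the log-mgf of a `[0, 1]`-valued variable, so each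
slot contributes a factor at most `1` to the mgf of the sum. -/
noncomputable def tiltedScore {α : Type*} [DecidableEq α] (a : α) (μ t : ℝ) (x : α) (b : Bool) :
    ℝ :=
  if x = a then t * (b.toNat - μ) - t ^ 2 / 8 else 0

lemma sum_tiltedScore {ι α : Type*} [Fintype ι] [DecidableEq α] (x : ι → α) (b : ι → Bool)
    (a : α) (μ t : ℝ) :
    ∑ i, tiltedScore a μ t (x i) (b i) =
      t * #{i | x i = a ∧ b i = true} - (t * μ + t ^ 2 / 8) * #{i | x i = a} := by
  simp only [card_filter, Nat.cast_sum, Nat.cast_ite, Nat.cast_one, Nat.cast_zero, mul_sum,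
    ← sum_sub_distrib]
  refine sum_congr rfl fun i _ ↦ ?_
  by_cases hx : x i = a <;> cases b i <;> simp [tiltedScore, hx] <;> ring

lemma le_sum_tiltedScore {ι α : Type*} [Fintype ι] [DecidableEq α] {x : ι → α} {b : ι → Bool}
    {a : α} {μ Δ m : ℝ} (hμ : 0 ≤ μ) (hΔ : 0 < Δ) (hm : m ≤ 2 * #{i | x i = a})
    (hmean : μ + Δ / 2 ≤ (#{i | x i = a ∧ b i = true} : ℝ) / #{i | x i = a}) :
    Δ ^ 2 * m / 4 ≤ ∑ i, tiltedScore a μ (2 * Δ) (x i) (b i) := by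
  rw [sum_tiltedScore]
  set S : ℝ := ↑(#{i | x i = a})
  set num : ℝ := ↑(#{i | x i = a ∧ b i = true})
  rcases (Nat.cast_nonneg _ : (0 : ℝ) ≤ S).eq_or_lt with hS | hS
  · rw [show S = 0 from hS.symm, div_zero] at hmean; linarith
  rw [le_div_iff₀ hS] at hmean
  nlinarith

lemma measure_le_sum_tiltedScore_le {α ι : Type*} [MeasurableSpace α]
    [MeasurableSingletonClass α] [DecidableEq α] [Fintype ι] {X : ι → Ω → α} {Y : ι → Ω → Bool}
    (hindep : iIndepFun (fun i ω ↦ (X i ω, Y i ω)) P) (hXY : ∀ i, IndepFun (X i) (Y i) P)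
    (hX : ∀ i, Measurable (X i)) (hY : ∀ i, Measurable (Y i)) {μ : ℝ} (hμ : 0 ≤ μ)
    (hYμ : ∀ i, P {ω | Y i ω = true} = ENNReal.ofReal μ) (a : α) (t c : ℝ) :
    P {ω | c ≤ ∑ i, tiltedScore a μ t (X i ω) (Y i ω)} ≤ ENNReal.ofReal (exp (-c)) := by
  set g : Bool → ℝ := fun b ↦ t * (b.toNat - μ) - t ^ 2 / 8 with hg
  have hgmeas : Measurable g := measurable_of_countable g
  have hB : ∀ i, Measurable (fun ω ↦ ((Y i ω).toNat : ℝ)) := fun i ↦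
    (measurable_of_countable fun b : Bool ↦ (b.toNat : ℝ)).comp (hY i)
  have hB01 : ∀ i ω, ((Y i ω).toNat : ℝ) ∈ Set.Icc (0 : ℝ) 1 := fun i ω ↦ by
    cases Y i ω <;> simp
  have hslot : ∀ i, ∫ ω, exp (g (Y i ω)) ∂P ≤ 1 := fun i ↦ by
    simpa [hg, integral_toNat_eq (hY i) hμ (hYμ i)] using
      integral_exp_mul_sub_sub_le_one (P := P) (hB i) (hB01 i) t
  have hint : ∀ i, Integrable (fun ω ↦ exp (g (Y i ω))) P := fun i ↦ by
    simpa [hg, integral_toNat_eq (hY i) hμ (hYμ i), sub_eq_add_neg, exp_add, mul_assoc] using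
      ((hasSubgaussianMGF_of_mem_unitInterval (P := P) (hB i) (hB01 i)).integrable_exp_mul t
        ).mul_const (exp (-(t ^ 2 / 8)))
  have hscore : Measurable fun p : α × Bool ↦ tiltedScore a μ t p.1 p.2 :=
    Measurable.ite (measurable_fst (measurableSet_singleton a)) (hgmeas.comp measurable_snd)
      measurable_const
  rw [← ofReal_measureReal]
  refine ENNReal.ofReal_le_ofReal (measureReal_le_sum_le_exp_neg
    (hindep.comp (fun _ p ↦ tiltedScore a μ t p.1 p.2) fun _ ↦ hscore)
    (fun i ↦ hscore.comp ((hX i).prodMk (hY i))) (fun i ↦ ?_) (fun i ↦ ?_) c)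
  · exact integrable_exp_ite (hX i) (hgmeas.comp (hY i)) a (hint i)
  · exact integral_exp_ite_le_one (hX i) (hgmeas.comp (hY i))
      ((hXY i).comp measurable_id hgmeas) a (hint i) (hslot i)

end

theorem empirical_estimate_upper_tail_general
    {Ω : Type*} [MeasurableSpace Ω] (P : Measure Ω) [IsProbabilityMeasure P]
    (N : ℕ) (k : ℕ) (n : Fin N)
    (μn : ℝ) (hμn : μn ∈ Set.Ioc (0 : ℝ) 1) (Δ : ℝ) (hΔ : 0 < Δ)
    (X : Fin k → Ω → Fin N) (Y : Fin k → Ω → Bool)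
    (hXmeas : ∀ i, Measurable (X i)) (hYmeas : ∀ i, Measurable (Y i))
    (hXdist : ∀ i (c : Fin N), P {ω | X i ω = c} = ENNReal.ofReal (1 / N))
    (hYdist : ∀ i, P {ω | Y i ω = true} = ENNReal.ofReal μn)
    (hindep : iIndepFun
      (fun i : Fin k => fun ω => (X i ω, Y i ω)) P)
    (hXY : ∀ i, IndepFun (X i) (Y i) P)
    (S : Ω → ℕ) (hS : ∀ ω, S ω = (Finset.univ.filter fun i => X i ω = n).card)
    (est : Ω → ℝ)
    (hest : ∀ ω, est ω =
      if S ω = 0 then 0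
      else ((Finset.univ.filter fun i => X i ω = n ∧ Y i ω = true).card : ℝ) / S ω) :
    P {ω | est ω - μn ≥ Δ / 2} ≤
      ENNReal.ofReal (Real.exp (-(k : ℝ) / (2 * (N : ℝ) ^ 2))) +
        ENNReal.ofReal (Real.exp (-(Δ ^ 2 * k) / (4 * N))) := by
  have hsel : ∀ i, P.real {ω | X i ω = n} = 1 / N := fun i ↦ by
    rw [measureReal_def, hXdist, ENNReal.toReal_ofReal (by positivity)]
  have hsplit : {ω | est ω - μn ≥ Δ / 2} ⊆ {ω | 2 * (S ω : ℝ) < k * (1 / N)} ∪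
      {ω | Δ ^ 2 * (k * (1 / N)) / 4 ≤ ∑ i, tiltedScore n μn (2 * Δ) (X i ω) (Y i ω)} := by
    intro ω hω
    rcases lt_or_ge (2 * (S ω : ℝ)) (k * (1 / N)) with hrare | hfrequent
    · exact Or.inl hrare
    refine Or.inr (le_sum_tiltedScore hμn.1.le hΔ (hS ω ▸ hfrequent) ?_)
    have hmean : est ω = #{i | X i ω = n ∧ Y i ω = true} / S ω := by
      rw [hest ω]; split_ifs with h <;> simp [h]
    rw [← hS ω]; simp only [Set.mem_ofPred_eq, hmean] at hω; linarith
  have hrare := measure_two_mul_card_lt_le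
    (hindep.comp (fun _ ↦ Prod.fst) fun _ ↦ measurable_fst) hXmeas hsel
  have hfrequent := measure_le_sum_tiltedScore_le hindep hXY hXmeas hYmeas hμn.1.le hYdist n
    (2 * Δ) (Δ ^ 2 * (k * (1 / N)) / 4)
  calc P {ω | est ω - μn ≥ Δ / 2} ≤ _ := measure_mono hsplit
    _ ≤ _ := measure_union_le _ _
    _ ≤ _ := add_le_add (by simpa [hS] using hrare) hfrequent
    _ = _ := by congr 3 <;> ring

/-- **Upper tail of the empirical reliability estimate after `k` exploration slots.**
In each of `k` exploration slots a channel is chosen uniformly at random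
(`X i` i.i.d. uniform on `{1,…,N}`), and independently the state of channel `n`
in each slot is Bernoulli(`μn`) (`Y i`).  Let `S` be the number of slots in which
channel `n` was selected and let `μ̂n` be the empirical mean of the observed states
of channel `n` over those slots (`0` if `S = 0`).  Then for any `Δ > 0`,
`P(μ̂n − μn ≥ Δ/2) ≤ exp(−k/(2N²)) + exp(−Δ²k/(4N))`. -/
theorem empirical_estimate_upper_tail
    {Ω : Type*} [MeasurableSpace Ω] (P : Measure Ω) [IsProbabilityMeasure P]
    (N : ℕ) (hN : 1 ≤ N) (k : ℕ) (n : Fin N)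
    (μn : ℝ) (hμn : μn ∈ Set.Ioc (0 : ℝ) 1) (Δ : ℝ) (hΔ : 0 < Δ)
    (X : Fin k → Ω → Fin N) (Y : Fin k → Ω → Bool)
    (hXmeas : ∀ i, Measurable (X i)) (hYmeas : ∀ i, Measurable (Y i))
    (hXdist : ∀ i (c : Fin N), P {ω | X i ω = c} = ENNReal.ofReal (1 / N))
    (hYdist : ∀ i, P {ω | Y i ω = true} = ENNReal.ofReal μn)
    (hindep : iIndepFun
      (fun i : Fin k => fun ω => (X i ω, Y i ω)) P)
    (hXY : ∀ i, IndepFun (X i) (Y i) P)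
    (S : Ω → ℕ) (hS : ∀ ω, S ω = (Finset.univ.filter fun i => X i ω = n).card)
    (est : Ω → ℝ)
    (hest : ∀ ω, est ω =
      if S ω = 0 then 0
      else ((Finset.univ.filter fun i => X i ω = n ∧ Y i ω = true).card : ℝ) / S ω) :
    P {ω | est ω - μn ≥ Δ / 2} ≤
      ENNReal.ofReal (Real.exp (-(k : ℝ) / (2 * (N : ℝ) ^ 2))) +
        ENNReal.ofReal (Real.exp (-(Δ ^ 2 * k) / (4 * N))) :=
  empirical_estimate_upper_tail_general P N k n μn hμn Δ hΔ X Y hXmeas hYmeas hXdist hYdist hindep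
    hXY S hS est hest
end
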